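/- Fix n ∈ ℕ and r ∈ [0,1). Let ξ° be a diffuse random measure on ℝ^d, and let Y° = (Y°_s)_{s∈ℝ^d} be the background defined by: Y°_0 is uniform on [0,n)^d and independent of (X°,ξ°), and Y°_s is the vector from the lexicographically lowest corner of the box of the lattice nℤ^d − Y°_0 containing s, to s. Define π_r(Y°,ξ°) := ψ_r^μ(Y°_0) − Y°_0, where μ = θ_{−Y°_0}ξ°(· | [0,n)^d). Then π_r is a preserving shift: for each fixed value of (Y°,ξ°), the induced allocation rule τ_r(s) := s + π_r(θ_s(Y°,ξ°)) satisfies ξ°({s : τ_r(s) ∈ B}) = ξ°(B) for all Borel B ⊆ ℝ^d. -/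

import Mathlib

/-!
On each box of the lattice `nℤ^d - y₀`, the allocation is the translate of `ψ_r^μ`, with `μ`
the normalized restriction of `ξ°` to that box. The boxes partition `ℝ^d` countably, so it
suffices that `ψ_r^μ` preserves `μ`. Transported by `φ`, `μ` becomes an atomless law `ν` on
`[0, 1]`, whose distribution function `F` is continuous. Then `F` pushes `ν` to the uniform law,
and its quantile function pushes the uniform law back to `ν`, since `F⁻¹ v ≤ x ↔ v ≤ F x` for
`v ∈ (0, 1]`. In between, rotation by `r` mod 1 preserves the uniform law.
-/

open MeasureTheory ENNReal Set

namespace LT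

/-- Points of `ℝ^d`. -/
abbrev Rd (d : ℕ) := Fin d → ℝ

/-- Points of `ℤ^d`. -/
abbrev ZZd (d : ℕ) := Fin d → ℤ

/-- The shift `θ_t ξ`, satisfying `θ_t ξ (B) = ξ (B + t)`. -/
noncomputable def shiftM {d : ℕ} (t : Rd d) (ξ : Measure (Rd d)) : Measure (Rd d) :=
  Measure.map (fun x => x - t) ξ

/-- A (jointly) measurable action of the additive group `ℝ^d` on a measurable space `E`,
written `θ_t x = act t x`. -/
structure Action (d : ℕ) (E : Type*) [MeasurableSpace E] where
  act : Rd d → E → E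
  measurable_act : ∀ t, Measurable (act t)
  act_zero : ∀ x, act 0 x = x
  act_add : ∀ s t x, act s (act t x) = act (s + t) x

/-- The conditional (normalized) measure `ξ(· | A)`. -/
noncomputable def condM {d : ℕ} (ξ : Measure (Rd d)) (A : Set (Rd d)) : Measure (Rd d) :=
  (ξ A)⁻¹ • ξ.restrict A

/-- `0` lies in the support of `ξ`. -/
def zeroInSupport {d : ℕ} (ξ : Measure (Rd d)) : Prop :=
  ∀ U : Set (Rd d), IsOpen U → (0 : Rd d) ∈ U → 0 < ξ U

variable {d : ℕ} {Ω E : Type*} [MeasurableSpace Ω] [MeasurableSpace E]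

/-- The defining identity (1) of mass-stationarity for a fixed set `C` :
`(θ_{V_C}(X,ξ), V_C + U_C) =_D ((X,ξ), U_C)`, where the conditional distribution of `U_C`
given `(X,ξ)` is uniform on `C` and that of `V_C` given `((X,ξ),U_C)` is `ξ(· | C - U_C)`. -/
def MSIdentity (Θ : Action d E) (P : Measure Ω) (X : Ω → E) (ξ : Ω → Measure (Rd d))
    (C : Set (Rd d)) : Prop :=
  ∀ f : (E × Measure (Rd d)) × Rd d → ℝ≥0∞, Measurable f →
    ∫⁻ ω, (volume C)⁻¹ * ∫⁻ u in C,
        ∫⁻ v, f ((Θ.act v (X ω), shiftM v (ξ ω)), v + u)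
          ∂(condM (ξ ω) ((· + u) ⁻¹' C)) ∂volume ∂P
    = ∫⁻ ω, (volume C)⁻¹ * ∫⁻ u in C, f ((X ω, ξ ω), u) ∂volume ∂P

/-- Mass-stationarity of `(X, ξ)` under `P`. -/
def IsMassStationary (Θ : Action d E) (P : Measure Ω) (X : Ω → E)
    (ξ : Ω → Measure (Rd d)) : Prop :=
  ∀ C : Set (Rd d), MeasurableSet C → Bornology.IsBounded C → 0 < volume C →
    volume (frontier C) = 0 → MSIdentity Θ P X ξ C

/-- Stationarity of the pair `(X, ξ)` under `P`. -/
def IsStationary (Θ : Action d E) (P : Measure Ω) (X : Ω → E)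
    (ξ : Ω → Measure (Rd d)) : Prop :=
  ∀ t : Rd d, Measure.map (fun ω => (Θ.act t (X ω), shiftM t (ξ ω))) P
    = Measure.map (fun ω => (X ω, ξ ω)) P

/-- Stationarity of a random element `X` under `P`. -/
def IsStationaryElem (Θ : Action d E) (P : Measure Ω) (X : Ω → E) : Prop :=
  ∀ t : Rd d, Measure.map (fun ω => Θ.act t (X ω)) P = Measure.map X P

/-- `(Xc, ξc)` under `Pc` is the Palm version of the (stationary) pair `(X, ξ)` under `P`. -/
def IsPalmVersion {Ω' : Type*} [MeasurableSpace Ω']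
    (Θ : Action d E) (Pc : Measure Ω) (Xc : Ω → E) (ξc : Ω → Measure (Rd d))
    (P : Measure Ω') (X : Ω' → E) (ξ : Ω' → Measure (Rd d)) : Prop :=
  ∀ f : E × Measure (Rd d) → ℝ≥0∞, Measurable f →
    ∀ B : Set (Rd d), MeasurableSet B → 0 < volume B → volume B < ⊤ →
      ∫⁻ ω, f (Xc ω, ξc ω) ∂Pc
        = (volume B)⁻¹ * ∫⁻ ω, ∫⁻ t in B, f (Θ.act t (X ω), shiftM t (ξ ω)) ∂(ξ ω) ∂P

end LT
namespace LT

/-- Lexicographic order on `ℤ^d` (with the index order of `Fin d`). -/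
def lexLE {d : ℕ} (a b : ZZd d) : Prop :=
  a = b ∨ ∃ k : Fin d, a k < b k ∧ ∀ l, l < k → a l = b l

/-- The half-open unit cube `i + [0,1)^d` based at `i ∈ ℤ^d`. -/
def cube {d : ℕ} (i : ZZd d) : Set (Rd d) :=
  {x | ∀ k, (i k : ℝ) ≤ x k ∧ x k < (i k : ℝ) + 1}

/-- The half-open box `[0,n)^d`. -/
def boxN (d n : ℕ) : Set (Rd d) := {x | ∀ k, 0 ≤ x k ∧ x k < (n : ℝ)}

/-- The half-open unit box `[0,1)^d`. -/
def box01 (d : ℕ) : Set (Rd d) := boxN d 1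

/-- The simple point process on `ℤ^d` having a point at `i` iff `ξ(i + [0,1)^d) > 0`. -/
def Npts {d : ℕ} (ξ : Measure (Rd d)) : Set (ZZd d) := {i | 0 < ξ (cube i)}

/-- Squared Euclidean distance on `ℤ^d`. -/
def sqdist {d : ℕ} (i j : ZZd d) : ℤ := ∑ k, (i k - j k) ^ 2

open Classical in
/-- The point of `N ⊆ ℤ^d` closest to `i`, the lexicographically lowest one in case of
ties (junk value `i` if no such point exists, e.g. if `N = ∅`). -/
noncomputable def voronoiCenter {d : ℕ} (N : Set (ZZd d)) (i : ZZd d) : ZZd d :=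
  if h : ∃ j, j ∈ N ∧ (∀ j' ∈ N, sqdist i j ≤ sqdist i j') ∧
      (∀ j' ∈ N, sqdist i j' = sqdist i j → lexLE j j') then h.choose else i

/-- The Voronoi cell (w.r.t. `N`) containing the origin of `ℤ^d`: the set `D`. -/
def Dcell {d : ℕ} (N : Set (ZZd d)) : Set (ZZd d) :=
  {i | voronoiCenter N i = voronoiCenter N 0}

/-- The vector `S = S_0` from the `N`-point of the cell of `0` to `0`. -/
noncomputable def Svec {d : ℕ} (N : Set (ZZd d)) : ZZd d := -(voronoiCenter N 0)

/-- The set `D° = S + D`. -/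
noncomputable def Dc {d : ℕ} (N : Set (ZZd d)) : Set (ZZd d) :=
  (fun i => Svec N + i) '' Dcell N

/-- Embedding `ℤ^d → ℝ^d`. -/
def toRd {d : ℕ} (i : ZZd d) : Rd d := fun k => (i k : ℝ)

/-- The support of a measure on `ℝ^d`. -/
def msupport {d : ℕ} (ξ : Measure (Rd d)) : Set (Rd d) :=
  {x | ∀ U : Set (Rd d), IsOpen U → x ∈ U → 0 < ξ U}

end LT
namespace LT

/-- The distribution function `F_μ(x) = μ(φ ≤ x)` of the pushforward `P_μ` of `μ`
under `φ`. -/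
noncomputable def cdf {d : ℕ} (μ : Measure (Rd d)) (φ : Rd d → ℝ) (x : ℝ) : ℝ :=
  (μ (φ ⁻¹' Set.Iic x)).toReal

/-- The (right-continuous) generalized inverse `F_μ⁻¹(v) = inf {x : F_μ(x) ≥ v}`. -/
noncomputable def cdfInv {d : ℕ} (μ : Measure (Rd d)) (φ : Rd d → ℝ) (v : ℝ) : ℝ :=
  sInf {x : ℝ | v ≤ cdf μ φ x}

/-- The map `ψ_r^μ = φ⁻¹(F_μ⁻¹(F_μ(φ(·)) + r mod 1))` of `[0,n)^d` to itself. -/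
noncomputable def psiMap {d : ℕ} (μ : Measure (Rd d)) (φ : Rd d → ℝ) (ψ : ℝ → Rd d)
    (r : ℝ) (s : Rd d) : Rd d :=
  ψ (cdfInv μ φ (Int.fract (cdf μ φ (φ s) + r)))

end LT
namespace LT

/-- The lexicographically lowest corner of the box of the lattice `nℤ^d - y₀`
containing `s`. -/
noncomputable def corner (d n : ℕ) (y0 s : Rd d) : Rd d :=
  fun k => (n : ℝ) * (⌊(s k + y0 k) / (n : ℝ)⌋ : ℤ) - y0 k

/-- The allocation rule `τ_r` induced by the preserving shift `π_r` of Example 1: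
`τ_r` maps each point `s` of a box of `nℤ^d - y₀` to the point of the same box obtained
by applying `ψ_r^μ` (with `μ = θ_{s-Y°_s} ξ°(· | [0,n)^d)` the normalized restriction of
`ξ°` to that box) to the relative coordinate of `s`. -/
noncomputable def tauEx (d n : ℕ) (φ : Rd d → ℝ) (ψ : ℝ → Rd d) (r : ℝ)
    (ξm : Measure (Rd d)) (y0 s : Rd d) : Rd d :=
  corner d n y0 s +
    psiMap (condM (shiftM (corner d n y0 s) ξm) (boxN d n)) φ ψ r (s - corner d n y0 s)

end LT

namespace MeasureTheory

variable {α β : Type*} [MeasurableSpace α] [MeasurableSpace β] {μ : Measure α}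

theorem map_fract_add_volume_Ioc (r : ℝ) :
    (volume.restrict (Ioc (0 : ℝ) 1)).map (fun v => Int.fract (v + r))
      = volume.restrict (Ioc 0 1) := by
  set g : UnitAddCircle → ℝ := fun y => AddCircle.equivIco 1 0 y
  have hg : Measurable g :=
    measurable_subtype_coe.comp (AddCircle.measurableEquivIco 1 0).measurable
  -- `Int.fract` factors through `ℝ/ℤ`, onto which every `(t, t + 1]` projects measure-preservingly.
  have hfract (t : ℝ) :
      (volume.restrict (Ioc t (t + 1))).map Int.fract = (volume : Measure UnitAddCircle).map g := by
    rw [show (Int.fract : ℝ → ℝ) = g ∘ (↑) by funext x; simp [g],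
      ← Measure.map_map hg AddCircle.measurable_mk', (UnitAddCircle.measurePreserving_mk t).map_eq]
  have hshift :
      (volume.restrict (Ioc (0 : ℝ) 1)).map (· + r) = volume.restrict (Ioc r (r + 1)) := by
    have := ((measurePreserving_add_right volume r).restrict_preimage
      (measurableSet_Ioc (a := r) (b := r + 1))).map_eq
    rwa [preimage_add_const_Ioc, sub_self, add_sub_cancel_left] at this
  have hid : (volume.restrict (Ioc (0 : ℝ) 1)).map Int.fract = volume.restrict (Ioc 0 1) := by
    conv_rhs => rw [← Measure.map_id (μ := volume.restrict (Ioc (0 : ℝ) 1))]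
    refine Measure.map_congr ?_
    filter_upwards [ae_restrict_mem measurableSet_Ioc, Measure.ae_ne _ 1] with v hv hv1
    exact Int.fract_eq_self.2 ⟨hv.1.le, lt_of_le_of_ne hv.2 hv1⟩
  rw [show (fun v => Int.fract (v + r)) = Int.fract ∘ (· + r) from rfl,
    ← Measure.map_map measurable_fract (measurable_add_const r), hshift, hfract, ← hfract 0,
    zero_add, hid]

theorem nullSingletonClass_map [MeasurableSingletonClass β] [NullSingletonClass μ] {f : α → β}
    (hf : Measurable f) {A : Set α} (hinj : InjOn f A) (hA : ∀ᵐ x ∂μ, x ∈ A) :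
    NullSingletonClass (μ.map f) := by
  refine ⟨fun t => ?_⟩
  have hsub : (f ⁻¹' {t} ∩ A).Subsingleton := fun x hx y hy =>
    hinj hx.2 hy.2 (hx.1.trans hy.1.symm)
  rw [Measure.map_apply hf (measurableSet_singleton t)]
  refine measure_mono_null_ae ?_ (hsub.measure_zero μ)
  filter_upwards [hA] with x hx h using ⟨h, hx⟩

theorem measurePreserving_of_fiberwise {ι : Type*} [Countable ι] [MeasurableSpace ι]
    [MeasurableSingletonClass ι] {κ : α → ι} (hκ : Measurable κ) {G : ι → α → α}
    (hG : ∀ i, MeasurePreserving (G i) (μ.restrict (κ ⁻¹' {i})) (μ.restrict (κ ⁻¹' {i}))) :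
    MeasurePreserving (fun x => G (κ x) x) μ μ := by
  have hτ : Measurable fun x => G (κ x) x :=
    (measurable_from_prod_countable_left (f := fun p : α × ι => G p.2 p.1)
      fun i => (hG i).measurable).comp (measurable_id.prodMk hκ)
  have hμ : μ = Measure.sum fun i => μ.restrict (κ ⁻¹' {i}) := by
    rw [← Measure.restrict_iUnion (pairwise_disjoint_fiber κ)
      fun i => hκ (measurableSet_singleton i), ← preimage_iUnion, iUnion_of_singleton,
      preimage_univ, Measure.restrict_univ]
  refine ⟨hτ, ?_⟩
  calc μ.map (fun x => G (κ x) x)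
      = Measure.sum fun i => (μ.restrict (κ ⁻¹' {i})).map fun x => G (κ x) x := by
        rw [← Measure.map_sum (hμ ▸ hτ.aemeasurable), ← hμ]
    _ = Measure.sum fun i => μ.restrict (κ ⁻¹' {i}) := by
        congr 1
        funext i
        conv_rhs => rw [← (hG i).map_eq]
        refine Measure.map_congr ?_
        filter_upwards [ae_restrict_mem (hκ (measurableSet_singleton i))] with x hx
        rw [mem_singleton_iff.1 hx]
    _ = μ := hμ.symm

end MeasureTheory

namespace ProbabilityTheory

noncomputable def quantile (ν : Measure ℝ) (v : ℝ) : ℝ := sInf {x | v ≤ cdf ν x}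

theorem quantile_eq_zero_of_notMem (ν : Measure ℝ) {v : ℝ} (hv : v ∉ Ioc 0 1) :
    quantile ν v = 0 := by
  rcases le_or_gt v 0 with h0 | h1
  · have : {x | v ≤ cdf ν x} = univ := eq_univ_of_forall fun x => h0.trans (cdf_nonneg ν x)
    rw [quantile, this, Real.sInf_of_not_bddBelow not_bddBelow_univ]
  · have : {x | v ≤ cdf ν x} = ∅ :=
      eq_empty_of_forall_notMem fun x hx => hv ⟨h1, hx.trans (cdf_le_one ν x)⟩
    rw [quantile, this, Real.sInf_empty]

variable {ν : Measure ℝ} [IsProbabilityMeasure ν]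

theorem cdf_eq_zero_of_neg (hν : ∀ᵐ x ∂ν, x ∈ Icc (0 : ℝ) 1) {x : ℝ} (hx : x < 0) :
    cdf ν x = 0 := by
  have : ν (Iic x) = 0 := by
    refine measure_mono_null ?_ (ae_iff.1 hν)
    exact fun y hy hmem => (hmem.1.trans hy).not_gt hx
  rw [cdf_eq_real, measureReal_def, this, toReal_zero]

theorem cdf_eq_one_of_one_le (hν : ∀ᵐ x ∂ν, x ∈ Icc (0 : ℝ) 1) {x : ℝ} (hx : 1 ≤ x) :
    cdf ν x = 1 := by
  have : ν (Iic x)ᶜ = 0 := by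
    refine measure_mono_null ?_ (ae_iff.1 hν)
    exact fun y hy hmem => hy (hmem.2.trans hx)
  rw [cdf_eq_real, measureReal_def, (prob_compl_eq_zero_iff measurableSet_Iic).1 this, toReal_one]

variable [NullSingletonClass ν]

theorem continuous_cdf : Continuous (cdf ν) := by
  refine continuous_iff_continuousAt.2 fun x =>
    continuousAt_iff_continuous_left_right.2 ⟨?_, (cdf ν).right_continuous x⟩
  have hjump : cdf ν x ≤ Function.leftLim (cdf ν) x := by
    have := (cdf ν).measure_singleton x
    rwa [measure_cdf, measure_singleton, eq_comm, ofReal_eq_zero, sub_nonpos] at this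
  rw [← continuousWithinAt_Iio_iff_Iic, (monotone_cdf ν).continuousWithinAt_Iio_iff_leftLim_eq]
  exact le_antisymm ((monotone_cdf ν).leftLim_le le_rfl) hjump

theorem quantile_le_iff (hν : ∀ᵐ x ∂ν, x ∈ Icc (0 : ℝ) 1) {v : ℝ} (hv : v ∈ Ioc 0 1)
    (x : ℝ) : quantile ν v ≤ x ↔ v ≤ cdf ν x := by
  have hne : {x | v ≤ cdf ν x}.Nonempty :=
    ⟨1, show v ≤ cdf ν 1 by rw [cdf_eq_one_of_one_le hν le_rfl]; exact hv.2⟩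
  have hbdd : BddBelow {x | v ≤ cdf ν x} := ⟨0, fun y hy => not_lt.1 fun hy0 =>
    (hv.1.trans_le hy).ne' (cdf_eq_zero_of_neg hν hy0)⟩
  refine ⟨fun h => ?_, fun h => csInf_le hbdd h⟩
  have hmem : quantile ν v ∈ {x | v ≤ cdf ν x} :=
    (isClosed_le continuous_const continuous_cdf).csInf_mem hne hbdd
  exact hmem.trans (monotone_cdf ν h)

theorem measurable_quantile (hν : ∀ᵐ x ∂ν, x ∈ Icc (0 : ℝ) 1) : Measurable (quantile ν) := by
  refine measurable_of_Iic fun x => ?_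
  have : quantile ν ⁻¹' Iic x = Ioc 0 1 ∩ Iic (cdf ν x) ∪ (Ioc 0 1)ᶜ ∩ {_v | 0 ≤ x} := by
    ext v
    by_cases hv : v ∈ Ioc 0 1
    · simp only [mem_preimage, mem_Iic, quantile_le_iff hν hv, mem_union, mem_inter_iff, hv,
        true_and, mem_compl_iff, not_true_eq_false, false_and, or_false]
    · simp only [mem_preimage, mem_Iic, quantile_eq_zero_of_notMem ν hv, mem_union,
        mem_inter_iff, hv, false_and, mem_compl_iff, not_false_eq_true, true_and, false_or]
      rfl
  rw [this]
  exact (measurableSet_Ioc.inter measurableSet_Iic).union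
    (measurableSet_Ioc.compl.inter (MeasurableSet.const _))

theorem cdf_quantile (hν : ∀ᵐ x ∂ν, x ∈ Icc (0 : ℝ) 1) {v : ℝ} (hv : v ∈ Ioc 0 1) :
    cdf ν (quantile ν v) = v := by
  obtain ⟨x, -, hx⟩ := intermediate_value_Icc (show (-1 : ℝ) ≤ 1 by norm_num)
    continuous_cdf.continuousOn (show v ∈ Icc (cdf ν (-1)) (cdf ν 1) from
      ⟨by rw [cdf_eq_zero_of_neg hν (x := -1) (by norm_num)]; exact hv.1.le,
        by rw [cdf_eq_one_of_one_le hν le_rfl]; exact hv.2⟩)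
  have hqx : quantile ν v ≤ x := (quantile_le_iff hν hv x).2 hx.ge
  exact le_antisymm ((monotone_cdf ν hqx).trans_eq hx) ((quantile_le_iff hν hv _).1 le_rfl)

theorem map_quantile_volume_Ioc (hν : ∀ᵐ x ∂ν, x ∈ Icc (0 : ℝ) 1) :
    (volume.restrict (Ioc 0 1)).map (quantile ν) = ν := by
  have : IsProbabilityMeasure (volume.restrict (Ioc (0 : ℝ) 1)) := ⟨by simp⟩
  have := Measure.isProbabilityMeasure_map (measurable_quantile hν).aemeasurable
    (μ := volume.restrict (Ioc (0 : ℝ) 1))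
  refine Measure.ext_of_Iic _ _ fun x => ?_
  have hpre : quantile ν ⁻¹' Iic x ∩ Ioc 0 1 = Ioc 0 (cdf ν x) := by
    ext v
    constructor
    · rintro ⟨hq, hv⟩
      exact ⟨hv.1, (quantile_le_iff hν hv x).1 hq⟩
    · rintro ⟨hv0, hvx⟩
      have hv : v ∈ Ioc 0 1 := ⟨hv0, hvx.trans (cdf_le_one ν x)⟩
      exact ⟨(quantile_le_iff hν hv x).2 hvx, hv⟩
  rw [Measure.map_apply (measurable_quantile hν) measurableSet_Iic,
    Measure.restrict_apply (measurable_quantile hν measurableSet_Iic), hpre, Real.volume_Ioc,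
    sub_zero, ofReal_cdf]

theorem map_cdf (hν : ∀ᵐ x ∂ν, x ∈ Icc (0 : ℝ) 1) :
    ν.map (cdf ν) = volume.restrict (Ioc 0 1) := by
  rw [congrArg (Measure.map (cdf ν)) (map_quantile_volume_Ioc hν).symm,
    Measure.map_map continuous_cdf.measurable (measurable_quantile hν)]
  conv_rhs => rw [← Measure.map_id (μ := volume.restrict (Ioc (0 : ℝ) 1))]
  refine Measure.map_congr ?_
  filter_upwards [ae_restrict_mem measurableSet_Ioc] with v hv using cdf_quantile hν hv

theorem map_quantile_fract_add_cdf (hν : ∀ᵐ x ∂ν, x ∈ Icc (0 : ℝ) 1) (r : ℝ) :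
    ν.map (fun x => quantile ν (Int.fract (cdf ν x + r))) = ν := by
  have hfract : Measurable fun v : ℝ => Int.fract (v + r) :=
    measurable_fract.comp (measurable_add_const r)
  change ν.map (quantile ν ∘ (fun v => Int.fract (v + r)) ∘ cdf ν) = ν
  rw [← Measure.map_map (measurable_quantile hν) (hfract.comp continuous_cdf.measurable),
    ← Measure.map_map hfract continuous_cdf.measurable, map_cdf hν, map_fract_add_volume_Ioc,
    map_quantile_volume_Ioc hν]

end ProbabilityTheory

namespace LT

variable {d : ℕ}

theorem measurePreserving_psiMap {φ : Rd d → ℝ} {ψ : ℝ → Rd d} {A : Set (Rd d)}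
    (hφ : Measurable φ) (hψ : Measurable ψ) (hmaps : MapsTo φ A (Icc 0 1))
    (hinv : LeftInvOn ψ φ A) (μ : Measure (Rd d)) [IsProbabilityMeasure μ]
    [NullSingletonClass μ] (hμ : ∀ᵐ x ∂μ, x ∈ A) (r : ℝ) :
    MeasurePreserving (psiMap μ φ ψ r) μ μ := by
  set ν := μ.map φ
  have : IsProbabilityMeasure ν := Measure.isProbabilityMeasure_map hφ.aemeasurable
  have : NullSingletonClass ν := nullSingletonClass_map hφ hinv.injOn hμ
  have hν : ∀ᵐ x ∂ν, x ∈ Icc (0 : ℝ) 1 :=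
    (ae_map_iff hφ.aemeasurable measurableSet_Icc).2 (hμ.mono fun x hx => hmaps hx)
  have hcdf : cdf μ φ = ProbabilityTheory.cdf ν := funext fun x => by
    rw [ProbabilityTheory.cdf_eq_real, measureReal_def, Measure.map_apply hφ measurableSet_Iic,
      cdf]
  set T := fun x => ProbabilityTheory.quantile ν (Int.fract (ProbabilityTheory.cdf ν x + r))
  have hpsi : psiMap μ φ ψ r = ψ ∘ T ∘ φ := by
    funext s
    simp only [psiMap, cdfInv, hcdf]
    rfl
  have hT : Measurable T := (ProbabilityTheory.measurable_quantile hν).comp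
    ((measurable_fract.comp (measurable_add_const r)).comp
      ProbabilityTheory.continuous_cdf.measurable)
  refine ⟨hpsi ▸ hψ.comp (hT.comp hφ), ?_⟩
  rw [hpsi, ← Measure.map_map hψ (hT.comp hφ), ← Measure.map_map hT hφ,
    ProbabilityTheory.map_quantile_fract_add_cdf hν r, Measure.map_map hψ hφ]
  conv_rhs => rw [← Measure.map_id (μ := μ)]
  exact Measure.map_congr (hμ.mono fun x hx => hinv hx)

theorem measurePreserving_psiMap_restrict {φ : Rd d → ℝ} {ψ : ℝ → Rd d} {A : Set (Rd d)}
    (hA : MeasurableSet A) (hφ : Measurable φ) (hψ : Measurable ψ)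
    (hmaps : MapsTo φ A (Icc 0 1)) (hinv : LeftInvOn ψ φ A) (η : Measure (Rd d))
    [NullSingletonClass η] (hηA : η A ≠ ∞) (r : ℝ) :
    MeasurePreserving (psiMap (condM η A) φ ψ r) (η.restrict A) (η.restrict A) := by
  rcases eq_or_ne (η A) 0 with h0 | h0
  · have hcond : condM η A = 0 := by simp [condM, h0]
    have hconst : psiMap (condM η A) φ ψ r = fun _ => ψ (cdfInv 0 φ (Int.fract (0 + r))) := by
      funext s
      simp [psiMap, cdf, hcond]
    rw [hconst, Measure.restrict_eq_zero.2 h0]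
    exact ⟨measurable_const, by simp⟩
  have : IsProbabilityMeasure (condM η A) :=
    ProbabilityTheory.cond_isProbabilityMeasure_of_finite h0 hηA
  have : NullSingletonClass (condM η A) :=
    ⟨fun x => ProbabilityTheory.cond_absolutelyContinuous (measure_singleton x)⟩
  have hpres := measurePreserving_psiMap hφ hψ hmaps hinv (condM η A)
    (ProbabilityTheory.ae_cond_mem hA) r
  have hrestrict : η.restrict A = η A • condM η A := by
    rw [condM, smul_smul, ENNReal.mul_inv_cancel h0 hηA, one_smul]
  refine ⟨hpres.measurable, ?_⟩
  rw [hrestrict, Measure.map_smul, hpres.map_eq]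

theorem measurePreserving_add_comp_sub {μ : Measure (Rd d)} {A : Set (Rd d)}
    (hA : MeasurableSet A) (a : Rd d) {Ψ : Rd d → Rd d}
    (hΨ : MeasurePreserving Ψ ((shiftM a μ).restrict A) ((shiftM a μ).restrict A)) :
    MeasurePreserving (fun s => a + Ψ (s - a)) (μ.restrict ((· - a) ⁻¹' A))
      (μ.restrict ((· - a) ⁻¹' A)) := by
  have hsub :
      MeasurePreserving (· - a) (μ.restrict ((· - a) ⁻¹' A)) ((shiftM a μ).restrict A) :=
    ⟨measurable_sub_const a, (Measure.restrict_map (measurable_sub_const a) hA).symm⟩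
  have hadd :
      MeasurePreserving (a + ·) ((shiftM a μ).restrict A) (μ.restrict ((· - a) ⁻¹' A)) := by
    refine ⟨measurable_const_add a, ?_⟩
    rw [← hsub.map_eq, Measure.map_map (measurable_const_add a) (measurable_sub_const a)]
    simp only [Function.comp_def, add_sub_cancel, Measure.map_id']
  exact hadd.comp (hΨ.comp hsub)

instance nullSingletonClass_shiftM (t : Rd d) (ξ : Measure (Rd d)) [NullSingletonClass ξ] :
    NullSingletonClass (shiftM t ξ) :=
  nullSingletonClass_map (measurable_sub_const t) (sub_left_injective.injOn (s := univ))
    (ae_of_all _ mem_univ)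

instance isFiniteMeasureOnCompacts_shiftM (t : Rd d) (ξ : Measure (Rd d))
    [IsFiniteMeasureOnCompacts ξ] : IsFiniteMeasureOnCompacts (shiftM t ξ) :=
  Measure.IsFiniteMeasureOnCompacts.map ξ (Homeomorph.subRight t)

theorem measurableSet_boxN (n : ℕ) : MeasurableSet (boxN d n) := by
  have : boxN d n = univ.pi fun _ => Ico 0 (n : ℝ) := by ext; simp [boxN]
  rw [this]
  exact MeasurableSet.univ_pi fun _ => measurableSet_Ico

theorem isBounded_boxN (n : ℕ) : Bornology.IsBounded (boxN d n) :=
  (Metric.isBounded_Icc (0 : Rd d) fun _ => n).subset fun _ hx =>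
    ⟨fun k => (hx k).1, fun k => (hx k).2.le⟩

noncomputable def boxIndex (d n : ℕ) (y0 s : Rd d) : ZZd d := fun k => ⌊(s k + y0 k) / n⌋

noncomputable def latticeCorner (d n : ℕ) (y0 : Rd d) (i : ZZd d) : Rd d :=
  fun k => n * i k - y0 k

theorem measurable_boxIndex (n : ℕ) (y0 : Rd d) : Measurable (boxIndex d n y0) :=
  measurable_pi_lambda _ fun k =>
    Int.measurable_floor.comp (((measurable_pi_apply k).add_const _).div_const _)

theorem preimage_boxIndex_singleton {n : ℕ} (hn : 0 < n) (y0 : Rd d) (i : ZZd d) :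
    boxIndex d n y0 ⁻¹' {i} = (· - latticeCorner d n y0 i) ⁻¹' boxN d n := by
  have hn' : (0 : ℝ) < n := Nat.cast_pos.2 hn
  ext s
  simp only [mem_preimage, mem_singleton_iff, funext_iff, boxIndex, boxN, Int.floor_eq_iff,
    le_div_iff₀ hn', div_lt_iff₀ hn']
  refine forall_congr' fun k => ?_
  simp only [Pi.sub_apply, latticeCorner]
  constructor <;> rintro ⟨h₁, h₂⟩ <;> constructor <;> linarith

theorem example_allocation_preserves_general
    {d n : ℕ} (hn : 0 < n) (φ : Rd d → ℝ) (ψ : ℝ → Rd d)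
    (hφ : Measurable φ) (hψ : Measurable ψ)
    (hbij : Set.BijOn φ (boxN d n) (Set.Ico (0 : ℝ) 1))
    (hinv : Set.InvOn ψ φ (boxN d n) (Set.Ico (0 : ℝ) 1))
    (r : ℝ)
    (ξm : Measure (Rd d)) [IsLocallyFiniteMeasure ξm]
    (hdiffuse : ∀ t, ξm {t} = 0)
    (y0 : Rd d) :
    ∀ B : Set (Rd d), MeasurableSet B →
      ξm ((fun s => tauEx d n φ ψ r ξm y0 s) ⁻¹' B) = ξm B := by
  intro B hB
  have : NullSingletonClass ξm := ⟨hdiffuse⟩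
  have hτ : MeasurePreserving (tauEx d n φ ψ r ξm y0) ξm ξm := by
    refine measurePreserving_of_fiberwise (measurable_boxIndex n y0)
      (G := fun i s => latticeCorner d n y0 i + psiMap (condM (shiftM (latticeCorner d n y0 i) ξm)
        (boxN d n)) φ ψ r (s - latticeCorner d n y0 i)) fun i => ?_
    rw [preimage_boxIndex_singleton hn]
    exact measurePreserving_add_comp_sub (measurableSet_boxN n) _
      (measurePreserving_psiMap_restrict (measurableSet_boxN n) hφ hψ
        (hbij.mapsTo.mono_right Ico_subset_Icc_self) hinv.1 _
        (isBounded_boxN n).measure_lt_top.ne r)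
  exact hτ.measure_preimage hB.nullMeasurableSet

/-- **Example 1, main claim.** For a diffuse random measure `ξ°` and the background
`Y°` built from a uniform shift `Y°_0` of the lattice `nℤ^d`, the map
`π_r(Y°,ξ°) = ψ_r^μ(Y°_0) - Y°_0` with `μ = θ_{-Y°_0}ξ°(· | [0,n)^d)` is a preserving
shift: for each fixed value of `(Y°,ξ°)` the induced allocation rule `τ_r` preserves
`ξ°`. -/
theorem example_allocation_preserves
    {d n : ℕ} (hn : 0 < n) (φ : Rd d → ℝ) (ψ : ℝ → Rd d)
    (hφ : Measurable φ) (hψ : Measurable ψ)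
    (hbij : Set.BijOn φ (boxN d n) (Set.Ico (0 : ℝ) 1))
    (hinv : Set.InvOn ψ φ (boxN d n) (Set.Ico (0 : ℝ) 1))
    (r : ℝ) (hr : r ∈ Set.Ico (0 : ℝ) 1)
    (ξm : Measure (Rd d)) [IsLocallyFiniteMeasure ξm]
    (hdiffuse : ∀ t, ξm {t} = 0)
    (y0 : Rd d) (hy0 : y0 ∈ boxN d n) :
    ∀ B : Set (Rd d), MeasurableSet B →
      ξm ((fun s => tauEx d n φ ψ r ξm y0 s) ⁻¹' B) = ξm B :=
  example_allocation_preserves_general hn φ ψ hφ hψ hbij hinv r ξm hdiffuse y0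

end LT
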